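/- arXiv:2105.05565 — 2 statements merged into one kernel-verified Lean document; each statement's English description precedes it below -/
import Mathlib

section
/- Let A, W be m×m real symmetric positive definite matrices, b ∈ ℝ^m, w* = A⁻¹b, and let a finite sketch distribution be given by matrices S_1, …, S_q (each with Sᵀ_i A W⁻¹ A S_i invertible) and probabilities p_1, …, p_q ≥ 0 summing to 1. Let (η_t)_{t≥0} satisfy 0 < η_t < 1 and set ζ_0 = 0 and ζ_t = (1/η_t) Σ_{s=0}^{t−1} η_s(1 − η_s) for t ≥ 1. For an i.i.d. index sequence ω, define momentum iterates from w^{−1}(ω) = w^0 and z^{−1}(ω) = w^0 by z^t(ω) = z^{t−1}(ω) − η_t ∇_W f_{S_{ω_t}}(w^t(ω)) and w^{t+1}(ω) = (1 − 1/(ζ_{t+1}+1)) w^t(ω) + (1/(ζ_{t+1}+1)) z^t(ω). Then for every k ≥ 0, with E[H_S] = Σ_i p_i H_{S_i} and E[·] the weighted sum over index sequences with weight Π_t p_{ω_t}: λ_min(E[H_S]) · E[‖A w^k − b‖²] ≤ ‖w^0 − w*‖²_W / Σ_{t=0}^{k} η_t (1 − η_t). -/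
open Matrix

/-- `H_S = S (Sᵀ A W⁻¹ A S)⁻¹ Sᵀ`. -/
noncomputable def sketchH {m τ : ℕ} (A W : Matrix (Fin m) (Fin m) ℝ)
    (S : Matrix (Fin m) (Fin τ) ℝ) : Matrix (Fin m) (Fin m) ℝ :=
  S * (Sᵀ * A * W⁻¹ * A * S)⁻¹ * Sᵀ

/-- `f_S(w) = ½ (A w − b)ᵀ H_S (A w − b)`. -/
noncomputable def sketchF {m τ : ℕ} (A W : Matrix (Fin m) (Fin m) ℝ)
    (S : Matrix (Fin m) (Fin τ) ℝ) (b w : Fin m → ℝ) : ℝ :=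
  (1 / 2) * ((A *ᵥ w - b) ⬝ᵥ (sketchH A W S *ᵥ (A *ᵥ w - b)))

/-- `∇_W f_S(w) = W⁻¹ A H_S (A w − b)`. -/
noncomputable def sketchGrad {m τ : ℕ} (A W : Matrix (Fin m) (Fin m) ℝ)
    (S : Matrix (Fin m) (Fin τ) ℝ) (b w : Fin m → ℝ) : Fin m → ℝ :=
  W⁻¹ *ᵥ (A *ᵥ (sketchH A W S *ᵥ (A *ᵥ w - b)))

/-- `uᵀ W u`, the squared `W`-norm. -/
def normSqW {m : ℕ} (W : Matrix (Fin m) (Fin m) ℝ) (u : Fin m → ℝ) : ℝ :=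
  u ⬝ᵥ (W *ᵥ u)

/-- The momentum sketch-and-project iterates driven by a finite index sequence
`σ : Fin t → Fin q`.  `momIter … t σ = (z^{t-1}, w^t)`, starting from
`(z^{-1}, w⁰) = (w⁰, w⁰)`, with `z^t = z^{t-1} − η_t ∇_W f_{S_{σ_t}}(w^t)` and
`w^{t+1} = (1 − 1/(ζ_{t+1}+1)) w^t + (1/(ζ_{t+1}+1)) z^t`. -/
noncomputable def momIter {m q : ℕ} (A W : Matrix (Fin m) (Fin m) ℝ) (b w0 : Fin m → ℝ)
    (τ : Fin q → ℕ) (S : (i : Fin q) → Matrix (Fin m) (Fin (τ i)) ℝ)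
    (η ζ : ℕ → ℝ) : (t : ℕ) → (Fin t → Fin q) → ((Fin m → ℝ) × (Fin m → ℝ))
  | 0, _ => (w0, w0)
  | t + 1, σ =>
      let zw := momIter A W b w0 τ S η ζ t (fun k => σ k.castSucc)
      let z' := zw.1 - η t • sketchGrad A W (S (σ (Fin.last t))) b zw.2
      (z', (1 - 1 / (ζ (t + 1) + 1)) • zw.2 + (1 / (ζ (t + 1) + 1)) • z')

/- ## Auxiliary lemmas -/

lemma mulVec_dot {n:ℕ} (M : Matrix (Fin n) (Fin n) ℝ) (x v : Fin n → ℝ) :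
    (M *ᵥ x) ⬝ᵥ v = x ⬝ᵥ (Mᵀ *ᵥ v) := by
  rw [dotProduct_mulVec, vecMul_transpose, dotProduct_comm]

lemma dot_swap {n:ℕ} {M : Matrix (Fin n) (Fin n) ℝ} (hM : Mᵀ = M) (x v : Fin n → ℝ) :
    x ⬝ᵥ (M *ᵥ v) = v ⬝ᵥ (M *ᵥ x) := by
  rw [dotProduct_comm, mulVec_dot, hM]

lemma sketchH_sym {m τ : ℕ} {A W : Matrix (Fin m) (Fin m) ℝ}
    (hA : Aᵀ = A) (hW : Wᵀ = W) (S : Matrix (Fin m) (Fin τ) ℝ) :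
    (sketchH A W S)ᵀ = sketchH A W S := by
  have hWi : (W⁻¹)ᵀ = W⁻¹ := by rw [transpose_nonsing_inv, hW]
  have hM : (Sᵀ * A * W⁻¹ * A * S)ᵀ = Sᵀ * A * W⁻¹ * A * S := by
    simp only [transpose_mul, transpose_transpose, hA, hWi, Matrix.mul_assoc]
  rw [sketchH, transpose_mul, transpose_mul, transpose_transpose,
    transpose_nonsing_inv, hM]
  simp only [Matrix.mul_assoc]

lemma sketchH_psd {m τ : ℕ} {A W : Matrix (Fin m) (Fin m) ℝ}
    (hA : A.IsHermitian) (hW : W.PosDef) (S : Matrix (Fin m) (Fin τ) ℝ) :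
    (sketchH A W S).PosSemidef := by
  have hC : (A * W⁻¹ * A).PosSemidef := by
    have := (hW.inv.posSemidef).conjTranspose_mul_mul_same A
    rwa [hA.eq] at this
  have hM : (Sᵀ * A * W⁻¹ * A * S).PosSemidef := by
    have h := hC.conjTranspose_mul_mul_same S
    rw [conjTranspose_eq_transpose_of_trivial] at h
    have e : Sᵀ * (A * W⁻¹ * A) * S = Sᵀ * A * W⁻¹ * A * S := by
      simp only [Matrix.mul_assoc]
    rwa [e] at h
  have h := (hM.inv).mul_mul_conjTranspose_same S
  rwa [conjTranspose_eq_transpose_of_trivial] at h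

lemma sketchH_core {m τ : ℕ} {A W : Matrix (Fin m) (Fin m) ℝ}
    (S : Matrix (Fin m) (Fin τ) ℝ) (hS : IsUnit (Sᵀ * A * W⁻¹ * A * S)) :
    sketchH A W S * (A * W⁻¹ * A) * sketchH A W S = sketchH A W S := by
  set M := Sᵀ * A * W⁻¹ * A * S with hMdef
  have h2 : ∀ X : Matrix (Fin τ) (Fin m) ℝ,
      Sᵀ * (A * (W⁻¹ * (A * (S * X)))) = M * X := by
    intro X; rw [hMdef]; simp only [Matrix.mul_assoc]
  have hN : Sᵀ * (A * (W⁻¹ * (A * S))) = M := by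
    rw [hMdef]; simp only [Matrix.mul_assoc]
  rw [sketchH]
  simp only [Matrix.mul_assoc]
  rw [hN, h2 (M⁻¹ * Sᵀ), ← Matrix.mul_assoc M,
    mul_nonsing_inv M ((isUnit_iff_isUnit_det M).mp hS), Matrix.one_mul]

lemma inf_eig_quad {n:ℕ} {H : Matrix (Fin n) (Fin n) ℝ} (hH : H.IsHermitian) (x : Fin n → ℝ) :
    (⨅ j, hH.eigenvalues j) * (x ⬝ᵥ x) ≤ x ⬝ᵥ (H *ᵥ x) := by
  rcases Nat.eq_zero_or_pos n with h0 | hpos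
  · subst h0; simp [dotProduct]
  have : NeZero n := ⟨by omega⟩
  set U : Matrix (Fin n) (Fin n) ℝ := (hH.eigenvectorUnitary : Matrix (Fin n) (Fin n) ℝ) with hU
  have hUmem := hH.eigenvectorUnitary.2
  have hU2 : U * star U = 1 := (Unitary.mem_iff.mp hUmem).2
  have hstar : star U = Uᵀ := by
    rw [Matrix.star_eq_conjTranspose, conjTranspose_eq_transpose_of_trivial]
  set y := Uᵀ *ᵥ x with hy
  have hHx : H *ᵥ x = U *ᵥ (diagonal hH.eigenvalues *ᵥ y) := by
    conv_lhs => rw [hH.spectral_theorem, Unitary.conjStarAlgAut_apply]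
    rw [hstar, ← hU]
    simp [← mulVec_mulVec, Matrix.mul_assoc, hy]
  have hquad : x ⬝ᵥ (H *ᵥ x) = ∑ j, hH.eigenvalues j * (y j * y j) := by
    rw [hHx, dotProduct_comm, mulVec_dot, ← hy]
    simp [dotProduct, mulVec_diagonal]
    apply Finset.sum_congr rfl
    intro j _; ring
  have hnorm : x ⬝ᵥ x = ∑ j, y j * y j := by
    have h1 : x ⬝ᵥ x = x ⬝ᵥ ((U * Uᵀ) *ᵥ x) := by rw [← hstar, hU2, one_mulVec]
    rw [h1, ← mulVec_mulVec, dotProduct_comm, mulVec_dot]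
    simp [dotProduct, hy]
  rw [hquad, hnorm, Finset.mul_sum]
  apply Finset.sum_le_sum
  intro j _
  exact mul_le_mul_of_nonneg_right (ciInf_le (Finite.bddBelow_range _) j) (mul_self_nonneg _)

lemma normSqW_sub_smul {n:ℕ} {W : Matrix (Fin n) (Fin n) ℝ} (hWsym : Wᵀ = W)
    (e g : Fin n → ℝ) (η : ℝ) :
    normSqW W (e - η • g)
      = normSqW W e - 2*η*(e ⬝ᵥ (W *ᵥ g)) + η^2*(g ⬝ᵥ (W *ᵥ g)) := by
  simp only [normSqW, mulVec_sub, mulVec_smul, dotProduct_sub, sub_dotProduct,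
    dotProduct_smul, smul_dotProduct, smul_eq_mul]
  rw [dot_swap hWsym g e]
  ring

lemma step_quad {n : ℕ} (A W H : Matrix (Fin n) (Fin n) ℝ)
    (hWW : W * W⁻¹ = 1) (hWsym : Wᵀ = W) (hWisym : (W⁻¹)ᵀ = W⁻¹) (hAsym : Aᵀ = A)
    (hHsym : Hᵀ = H) (hHC : H * (A * W⁻¹ * A) * H = H)
    (b wst z w : Fin n → ℝ) (η : ℝ) (hAw : A *ᵥ wst = b) :
    normSqW W (z - η • (W⁻¹ *ᵥ (A *ᵥ (H *ᵥ (A *ᵥ w - b)))) - wst)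
      = normSqW W (z - wst)
        - (2*η - η^2) * ((A *ᵥ w - b) ⬝ᵥ (H *ᵥ (A *ᵥ w - b)))
        - 2*η * ((A *ᵥ (z - w)) ⬝ᵥ (H *ᵥ (A *ᵥ w - b))) := by
  set r := A *ᵥ w - b with hr
  set e := z - wst with he
  set g := W⁻¹ *ᵥ (A *ᵥ (H *ᵥ r)) with hg
  have hzg : z - η • g - wst = e - η • g := by rw [he]; abel
  have hWg : W *ᵥ g = A *ᵥ (H *ᵥ r) := by
    rw [hg, mulVec_mulVec, hWW, one_mulVec]
  have hAe : A *ᵥ e = r + A *ᵥ (z - w) := by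
    rw [he, hr, mulVec_sub, mulVec_sub, hAw]; abel
  have claim3 : e ⬝ᵥ (W *ᵥ g) = r ⬝ᵥ (H *ᵥ r) + (A *ᵥ (z - w)) ⬝ᵥ (H *ᵥ r) := by
    have h1 := mulVec_dot A e (H *ᵥ r)
    rw [hAsym] at h1
    rw [hWg, ← h1, hAe, add_dotProduct]
  have claim4 : g ⬝ᵥ (W *ᵥ g) = r ⬝ᵥ (H *ᵥ r) := by
    have hgr : g = (W⁻¹ * (A * H)) *ᵥ r := by
      rw [hg]; simp only [mulVec_mulVec, Matrix.mul_assoc]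
    have hAH : A *ᵥ (H *ᵥ r) = (A * H) *ᵥ r := by simp only [mulVec_mulVec]
    have hkey : (W⁻¹ * (A * H))ᵀ * (A * H) = H := by
      rw [transpose_mul, transpose_mul, hAsym, hHsym, hWisym]
      have h2 := hHC
      simp only [Matrix.mul_assoc] at h2 ⊢
      exact h2
    rw [hWg, hAH, hgr, mulVec_dot, mulVec_mulVec, hkey]
  rw [hzg, normSqW_sub_smul hWsym, claim3, claim4]
  ring

lemma sum_mulVec' {n q : ℕ} (M : Fin q → Matrix (Fin n) (Fin n) ℝ) (y : Fin n → ℝ) :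
    (∑ i, M i) *ᵥ y = ∑ i, M i *ᵥ y := by
  ext j
  simp only [Matrix.mulVec, dotProduct, Finset.sum_apply, Matrix.sum_apply,
    Finset.sum_mul]
  rw [Finset.sum_comm]

lemma sum_affine {q:ℕ} (p x y : Fin q → ℝ) (C0 c1 c2 : ℝ) :
    ∑ i, p i * (C0 - c1 * x i - c2 * y i)
      = C0 * (∑ i, p i) - c1 * (∑ i, p i * x i) - c2 * (∑ i, p i * y i) := by
  rw [Finset.sum_congr rfl
    (fun i _ => by ring :
      ∀ i ∈ Finset.univ, p i * (C0 - c1 * x i - c2 * y i)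
        = C0 * p i - c1 * (p i * x i) - c2 * (p i * y i))]
  simp [Finset.sum_sub_distrib, Finset.mul_sum]

lemma key_avg {m q : ℕ} (A W : Matrix (Fin m) (Fin m) ℝ) (hA : A.PosDef) (hW : W.PosDef)
    (hWW : W * W⁻¹ = 1) (hWsym : Wᵀ = W) (hWisym : (W⁻¹)ᵀ = W⁻¹) (hAsym : Aᵀ = A)
    (τ : Fin q → ℕ) (S : (i : Fin q) → Matrix (Fin m) (Fin (τ i)) ℝ)
    (hS : ∀ i, IsUnit ((S i)ᵀ * A * W⁻¹ * A * S i))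
    (p : Fin q → ℝ) (hp : ∀ i, 0 ≤ p i) (hp1 : ∑ i, p i = 1)
    (b wst : Fin m → ℝ) (hAw : A *ᵥ wst = b)
    (ηv ζv : ℝ) (hηv : 0 < ηv) (hζv : 0 ≤ ζv)
    (zp w wprev : Fin m → ℝ) (hd : zp - w = ζv • (w - wprev)) :
    ∑ i, p i * normSqW W (zp - ηv • sketchGrad A W (S i) b w - wst)
      ≤ normSqW W (zp - wst)
        - (ηv*(1-ηv) + ηv + ηv*ζv) *
            ((A *ᵥ w - b) ⬝ᵥ ((∑ i, p i • sketchH A W (S i)) *ᵥ (A *ᵥ w - b)))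
        + (ηv*ζv) *
            ((A *ᵥ wprev - b) ⬝ᵥ ((∑ i, p i • sketchH A W (S i)) *ᵥ (A *ᵥ wprev - b))) := by
  set Hb := ∑ i, p i • sketchH A W (S i) with hHb
  set r := A *ᵥ w - b with hr
  set rp := A *ᵥ wprev - b with hrp
  have hHbsym : Hbᵀ = Hb := by
    rw [hHb, Matrix.transpose_sum]
    exact Finset.sum_congr rfl fun i _ => by
      rw [Matrix.transpose_smul, sketchH_sym hAsym hWsym]
  have hspread : ∀ x y : Fin m → ℝ,
      x ⬝ᵥ (Hb *ᵥ y) = ∑ i, p i * (x ⬝ᵥ (sketchH A W (S i) *ᵥ y)) := by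
    intro x y
    rw [hHb, sum_mulVec']
    simp only [dotProduct, Finset.sum_apply, Finset.mul_sum]
    rw [Finset.sum_comm]
    refine Finset.sum_congr rfl fun i _ => Finset.sum_congr rfl fun j _ => ?_
    simp only [smul_mulVec, Pi.smul_apply, smul_eq_mul]
    ring
  have hHbpsd : ∀ x : Fin m → ℝ, 0 ≤ x ⬝ᵥ (Hb *ᵥ x) := by
    intro x
    rw [hspread]
    refine Finset.sum_nonneg fun i _ => mul_nonneg (hp i) ?_
    have h2 := (sketchH_psd hA.isHermitian hW (S i)).dotProduct_mulVec_nonneg x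
    simpa using h2
  have hstep : ∀ i, normSqW W (zp - ηv • sketchGrad A W (S i) b w - wst)
      = normSqW W (zp - wst)
        - (2*ηv - ηv^2) * (r ⬝ᵥ (sketchH A W (S i) *ᵥ r))
        - 2*ηv * ((A *ᵥ (zp - w)) ⬝ᵥ (sketchH A W (S i) *ᵥ r)) := by
    intro i
    simp only [sketchGrad, ← hr]
    exact step_quad A W (sketchH A W (S i)) hWW hWsym hWisym hAsym
      (sketchH_sym hAsym hWsym (S i)) (sketchH_core (S i) (hS i)) b wst zp w ηv hAw
  have hsum : ∑ i, p i * normSqW W (zp - ηv • sketchGrad A W (S i) b w - wst)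
      = normSqW W (zp - wst)
        - (2*ηv - ηv^2) * (r ⬝ᵥ (Hb *ᵥ r))
        - 2*ηv * ((A *ᵥ (zp - w)) ⬝ᵥ (Hb *ᵥ r)) := by
    rw [Finset.sum_congr rfl (fun i _ => by rw [hstep i])]
    rw [sum_affine, hp1, hspread, hspread]
    ring
  have hAd : A *ᵥ (zp - w) = ζv • (r - rp) := by
    rw [hd, mulVec_smul, mulVec_sub, hr, hrp]
    congr 1
    abel
  have hcross2 : (A *ᵥ (zp - w)) ⬝ᵥ (Hb *ᵥ r) = ζv * (r ⬝ᵥ (Hb *ᵥ r) - rp ⬝ᵥ (Hb *ᵥ r)) := by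
    rw [hAd, smul_dotProduct, sub_dotProduct, smul_eq_mul]
  have hyoung : 2 * (rp ⬝ᵥ (Hb *ᵥ r)) ≤ rp ⬝ᵥ (Hb *ᵥ rp) + r ⬝ᵥ (Hb *ᵥ r) := by
    have h0 := hHbpsd (rp - r)
    have hsw := dot_swap hHbsym r rp
    simp only [mulVec_sub, dotProduct_sub, sub_dotProduct] at h0
    linarith
  rw [hsum, hcross2]
  have hfac : 0 ≤ ηv * ζv := mul_nonneg hηv.le hζv
  nlinarith [mul_le_mul_of_nonneg_left hyoung hfac]

noncomputable def EX {q:ℕ} (p : Fin q → ℝ) (n : ℕ) (F : (Fin n → Fin q) → ℝ) : ℝ :=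
  ∑ σ : Fin n → Fin q, (∏ t, p (σ t)) * F σ

lemma EX_snoc {q:ℕ} (p : Fin q → ℝ) (n : ℕ) (F : (Fin (n+1) → Fin q) → ℝ) :
    EX p (n+1) F = EX p n (fun σ => ∑ i, p i * F (Fin.snoc σ i)) := by
  rw [EX, EX]
  rw [← Equiv.sum_comp (Fin.snocEquiv (fun _ => Fin q))
    (fun σ => (∏ t, p (σ t)) * F σ)]
  rw [Fintype.sum_prod_type]
  rw [Finset.sum_comm]
  apply Finset.sum_congr rfl
  intro σ _
  rw [Finset.mul_sum]
  apply Finset.sum_congr rfl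
  intro i _
  have h1 : (Fin.snocEquiv (fun _ => Fin q)) (i, σ) = Fin.snoc σ i := by
    ext k; simp [Fin.snocEquiv]
  rw [h1, Fin.prod_univ_castSucc]
  simp [Fin.snoc_castSucc, Fin.snoc_last]
  ring

lemma EX_mono {q:ℕ} (p : Fin q → ℝ) (hp : ∀ i, 0 ≤ p i) (n : ℕ)
    (F G : (Fin n → Fin q) → ℝ) (h : ∀ σ, F σ ≤ G σ) : EX p n F ≤ EX p n G := by
  refine Finset.sum_le_sum fun σ _ => ?_
  exact mul_le_mul_of_nonneg_left (h σ) (Finset.prod_nonneg fun t _ => hp (σ t))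

lemma EX_nonneg {q:ℕ} (p : Fin q → ℝ) (hp : ∀ i, 0 ≤ p i) (n : ℕ)
    (F : (Fin n → Fin q) → ℝ) (h : ∀ σ, 0 ≤ F σ) : 0 ≤ EX p n F := by
  refine Finset.sum_nonneg fun σ _ =>
    mul_nonneg (Finset.prod_nonneg fun t _ => hp (σ t)) (h σ)

lemma EX_comb {q:ℕ} (p : Fin q → ℝ) (n : ℕ)
    (F G K : (Fin n → Fin q) → ℝ) (c1 c2 : ℝ) :
    EX p n (fun σ => F σ - c1 * G σ + c2 * K σ)
      = EX p n F - c1 * EX p n G + c2 * EX p n K := by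
  rw [EX, EX, EX, EX]
  rw [Finset.sum_congr rfl
    (fun σ _ => by ring :
      ∀ σ ∈ Finset.univ, (∏ t, p (σ t)) * (F σ - c1 * G σ + c2 * K σ)
        = (∏ t, p (σ t)) * F σ - c1 * ((∏ t, p (σ t)) * G σ)
            + c2 * ((∏ t, p (σ t)) * K σ))]
  rw [Finset.sum_add_distrib, Finset.sum_sub_distrib, ← Finset.mul_sum, ← Finset.mul_sum]

lemma EX_marg {q:ℕ} (p : Fin q → ℝ) (hp1 : ∑ i, p i = 1) (n : ℕ)
    (G : (Fin n → Fin q) → ℝ) :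
    EX p (n+1) (fun σ' => G (fun k => σ' k.castSucc)) = EX p n G := by
  rw [EX_snoc]
  have h : ∀ σ : Fin n → Fin q, ∀ i,
      (fun k : Fin n => (Fin.snoc σ i : Fin (n+1) → Fin q) k.castSucc) = σ := by
    intro σ i; funext k; simp
  congr 1
  funext σ
  simp only [h σ]
  rw [← Finset.sum_mul, hp1, one_mul]

lemma EX_zero {q:ℕ} (p : Fin q → ℝ) (G : (Fin 0 → Fin q) → ℝ) (c : ℝ)
    (h : ∀ σ, G σ = c) : EX p 0 G = c := by
  rw [EX]
  rw [Fintype.sum_unique]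
  simp [h]

/-- **Sublinear convergence of the last iterate of momentum sketch-and-project
(Theorem 6):** with `0 < η_t < 1`, `ζ_0 = 0`,
`ζ_t = (1/η_t) Σ_{s<t} η_s (1 − η_s)`, one has for every `k ≥ 0`
`λ_min(E[H_S]) E[‖A w^k − b‖²] ≤ ‖w⁰ − w*‖²_W / Σ_{t=0}^{k} η_t (1 − η_t)`.
(The hypothesis `hEH` records the — always valid — fact that `E[H_S]` is symmetric.) -/
theorem momentum_last_iterate_convergence {m q : ℕ}
    (A W : Matrix (Fin m) (Fin m) ℝ) (hA : A.PosDef) (hW : W.PosDef)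
    (b wstar : Fin m → ℝ) (hwstar : wstar = A⁻¹ *ᵥ b)
    (τ : Fin q → ℕ) (S : (i : Fin q) → Matrix (Fin m) (Fin (τ i)) ℝ)
    (hS : ∀ i, IsUnit ((S i)ᵀ * A * W⁻¹ * A * S i))
    (p : Fin q → ℝ) (hp : ∀ i, 0 ≤ p i) (hp1 : ∑ i, p i = 1)
    (η : ℕ → ℝ) (hη : ∀ t, 0 < η t ∧ η t < 1)
    (ζ : ℕ → ℝ)
    (hζ : ∀ t, ζ t = (η t)⁻¹ * ∑ s ∈ Finset.range t, η s * (1 - η s))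
    (hEH : (∑ i, p i • sketchH A W (S i)).IsHermitian)
    (w0 : Fin m → ℝ) :
    ∀ k : ℕ,
      (⨅ j, hEH.eigenvalues j) *
          (∑ σ : Fin k → Fin q, (∏ t, p (σ t)) *
            ((A *ᵥ (momIter A W b w0 τ S η ζ k σ).2 - b) ⬝ᵥ
              (A *ᵥ (momIter A W b w0 τ S η ζ k σ).2 - b)))
        ≤ normSqW W (w0 - wstar) / (∑ t ∈ Finset.range (k + 1), η t * (1 - η t)) := by
  intro k
  -- basic symmetry and invertibility facts
  have hAsym : Aᵀ = A := by
    rw [← conjTranspose_eq_transpose_of_trivial]; exact hA.isHermitian.eq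
  have hWsym : Wᵀ = W := by
    rw [← conjTranspose_eq_transpose_of_trivial]; exact hW.isHermitian.eq
  have hWW : W * W⁻¹ = 1 :=
    mul_nonsing_inv W ((isUnit_iff_isUnit_det W).mp hW.isUnit)
  have hWisym : (W⁻¹)ᵀ = W⁻¹ := by rw [transpose_nonsing_inv, hWsym]
  have hAwst : A *ᵥ wstar = b := by
    rw [hwstar, mulVec_mulVec, mul_nonsing_inv A ((isUnit_iff_isUnit_det A).mp hA.isUnit),
      one_mulVec]
  -- ζ facts
  have hζval : ∀ t, η t * ζ t = ∑ s ∈ Finset.range t, η s * (1 - η s) := by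
    intro t
    rw [hζ t, ← mul_assoc, mul_inv_cancel₀ (hη t).1.ne', one_mul]
  have hζnn : ∀ t, 0 ≤ ζ t := by
    intro t
    rw [hζ t]
    refine mul_nonneg (inv_nonneg.mpr (hη t).1.le) (Finset.sum_nonneg fun s _ => ?_)
    have := (hη s).1
    have := (hη s).2
    nlinarith
  have hζrec : ∀ t, η (t+1) * ζ (t+1) = η t * ζ t + η t * (1 - η t) := by
    intro t
    rw [hζval, hζval, Finset.sum_range_succ]
  -- the quadratic form w.r.t. the expected projection matrix
  set φ : (Fin m → ℝ) → ℝ := fun x =>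
    (A *ᵥ x - b) ⬝ᵥ ((∑ i, p i • sketchH A W (S i)) *ᵥ (A *ᵥ x - b)) with hφdef
  have hφnn : ∀ x, 0 ≤ φ x := by
    intro x
    simp only [hφdef]
    have hsp : ∀ y : Fin m → ℝ,
        y ⬝ᵥ ((∑ i, p i • sketchH A W (S i)) *ᵥ y)
          = ∑ i, p i * (y ⬝ᵥ (sketchH A W (S i) *ᵥ y)) := by
      intro y
      rw [sum_mulVec']
      simp only [dotProduct, Finset.sum_apply, Finset.mul_sum]
      rw [Finset.sum_comm]
      refine Finset.sum_congr rfl fun i _ => Finset.sum_congr rfl fun j _ => ?_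
      simp only [smul_mulVec, Pi.smul_apply, smul_eq_mul]
      ring
    rw [hsp]
    refine Finset.sum_nonneg fun i _ => mul_nonneg (hp i) ?_
    have h2 := (sketchH_psd hA.isHermitian hW (S i)).dotProduct_mulVec_nonneg (A *ᵥ x - b)
    simpa using h2
  have hnsq : ∀ x : Fin m → ℝ, 0 ≤ normSqW W x := by
    intro x
    have h2 := hW.posSemidef.dotProduct_mulVec_nonneg x
    simpa [normSqW] using h2
  -- unfolding of momIter at a successor
  have momSucc : ∀ (n:ℕ) (σ' : Fin (n+1) → Fin q),
      momIter A W b w0 τ S η ζ (n+1) σ'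
        = ((momIter A W b w0 τ S η ζ n (fun k => σ' k.castSucc)).1
            - η n • sketchGrad A W (S (σ' (Fin.last n))) b
                (momIter A W b w0 τ S η ζ n (fun k => σ' k.castSucc)).2,
           (1 - 1/(ζ (n+1)+1)) • (momIter A W b w0 τ S η ζ n (fun k => σ' k.castSucc)).2
            + (1/(ζ (n+1)+1)) •
              ((momIter A W b w0 τ S η ζ n (fun k => σ' k.castSucc)).1
                - η n • sketchGrad A W (S (σ' (Fin.last n))) b
                    (momIter A W b w0 τ S η ζ n (fun k => σ' k.castSucc)).2)) :=
    fun n σ' => rfl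
  -- momentum relation : z^t − w^{t+1} = ζ_{t+1} (w^{t+1} − w^t)
  have hdrel : ∀ (n:ℕ) (σ' : Fin (n+1) → Fin q),
      (momIter A W b w0 τ S η ζ (n+1) σ').1 - (momIter A W b w0 τ S η ζ (n+1) σ').2
        = ζ (n+1) • ((momIter A W b w0 τ S η ζ (n+1) σ').2
            - (momIter A W b w0 τ S η ζ n (fun k => σ' k.castSucc)).2) := by
    intro n σ'
    have hpos : (0:ℝ) < ζ (n+1) + 1 := by have := hζnn (n+1); linarith
    have hne : ζ (n+1) + 1 ≠ 0 := hpos.ne'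
    rw [momSucc]
    dsimp only
    match_scalars <;> (field_simp; try ring)
  -- one expected step of the method
  have stepEX : ∀ (n:ℕ) (prev : (Fin n → Fin q) → (Fin m → ℝ)),
      (∀ σ, (momIter A W b w0 τ S η ζ n σ).1 - (momIter A W b w0 τ S η ζ n σ).2
          = ζ n • ((momIter A W b w0 τ S η ζ n σ).2 - prev σ)) →
      EX p (n+1) (fun σ => normSqW W ((momIter A W b w0 τ S η ζ (n+1) σ).1 - wstar))
        + (η n*(1-η n) + η n + η n*ζ n) * EX p n (fun σ => φ ((momIter A W b w0 τ S η ζ n σ).2))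
      ≤ EX p n (fun σ => normSqW W ((momIter A W b w0 τ S η ζ n σ).1 - wstar))
        + (η n*ζ n) * EX p n (fun σ => φ (prev σ)) := by
    intro n prev hd
    have hz : ∀ (σ : Fin n → Fin q) (i : Fin q),
        (momIter A W b w0 τ S η ζ (n+1) (Fin.snoc σ i)).1
          = (momIter A W b w0 τ S η ζ n σ).1
              - η n • sketchGrad A W (S i) b (momIter A W b w0 τ S η ζ n σ).2 := by
      intro σ i
      rw [momSucc]
      have hres : (fun k : Fin n => (Fin.snoc σ i : Fin (n+1) → Fin q) k.castSucc) = σ := by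
        funext k; simp
      have hlast : (Fin.snoc σ i : Fin (n+1) → Fin q) (Fin.last n) = i := by simp
      simp only [hres]
      rw [hlast]
    rw [EX_snoc]
    have hpt : ∀ σ : Fin n → Fin q,
        (∑ i, p i * normSqW W ((momIter A W b w0 τ S η ζ (n+1) (Fin.snoc σ i)).1 - wstar))
          ≤ normSqW W ((momIter A W b w0 τ S η ζ n σ).1 - wstar)
              - (η n*(1-η n) + η n + η n*ζ n) * φ ((momIter A W b w0 τ S η ζ n σ).2)
              + (η n*ζ n) * φ (prev σ) := by
      intro σ
      have h1 := key_avg A W hA hW hWW hWsym hWisym hAsym τ S hS p hp hp1 b wstar hAwst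
        (η n) (ζ n) (hη n).1 (hζnn n)
        (momIter A W b w0 τ S η ζ n σ).1 (momIter A W b w0 τ S η ζ n σ).2 (prev σ) (hd σ)
      rw [Finset.sum_congr rfl
        (fun i _ => by rw [hz σ i] :
          ∀ i ∈ Finset.univ, p i * normSqW W ((momIter A W b w0 τ S η ζ (n+1) (Fin.snoc σ i)).1 - wstar)
            = p i * normSqW W ((momIter A W b w0 τ S η ζ n σ).1
                - η n • sketchGrad A W (S i) b (momIter A W b w0 τ S η ζ n σ).2 - wstar))]
      simp only [hφdef]
      exact h1
    have h2 := EX_mono p hp n _ _ hpt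
    have h3 : EX p n (fun σ => normSqW W ((momIter A W b w0 τ S η ζ n σ).1 - wstar)
          - (η n*(1-η n) + η n + η n*ζ n) * φ ((momIter A W b w0 τ S η ζ n σ).2)
          + (η n*ζ n) * φ (prev σ))
        = EX p n (fun σ => normSqW W ((momIter A W b w0 τ S η ζ n σ).1 - wstar))
          - (η n*(1-η n) + η n + η n*ζ n) * EX p n (fun σ => φ ((momIter A W b w0 τ S η ζ n σ).2))
          + (η n*ζ n) * EX p n (fun σ => φ (prev σ)) :=
      EX_comb p n _ _ _ _ _
    rw [h3] at h2
    linarith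
  -- the telescoped Lyapunov inequality
  have main : ∀ K:ℕ,
      EX p (K+1) (fun σ => normSqW W ((momIter A W b w0 τ S η ζ (K+1) σ).1 - wstar))
        + (η (K+1) * ζ (K+1)) * EX p K (fun σ => φ ((momIter A W b w0 τ S η ζ K σ).2))
        + ∑ t ∈ Finset.range (K+1), η t * EX p t (fun σ => φ ((momIter A W b w0 τ S η ζ t σ).2))
      ≤ normSqW W (w0 - wstar) := by
    intro K
    induction K with
    | zero =>
      have hstep0 := stepEX 0 (fun _ => w0) (by
        intro σ
        show w0 - w0 = ζ 0 • (w0 - w0)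
        simp)
      have hζ0 : η 0 * ζ 0 = 0 := by rw [hζval]; simp
      have hEX0 : EX p 0 (fun σ => normSqW W ((momIter A W b w0 τ S η ζ 0 σ).1 - wstar))
          = normSqW W (w0 - wstar) := EX_zero p _ _ (fun σ => rfl)
      rw [hζ0, hEX0] at hstep0
      rw [Finset.sum_range_one, hζrec 0, hζ0]
      linarith
    | succ K IH =>
      have hstep := stepEX (K+1)
        (fun σ' => (momIter A W b w0 τ S η ζ K (fun k => σ' k.castSucc)).2) (hdrel K)
      have hmarg : EX p (K+1)
            (fun σ' => φ ((momIter A W b w0 τ S η ζ K (fun k => σ' k.castSucc)).2))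
          = EX p K (fun σ => φ ((momIter A W b w0 τ S η ζ K σ).2)) :=
        EX_marg p hp1 K (fun σ => φ ((momIter A W b w0 τ S η ζ K σ).2))
      rw [hmarg] at hstep
      rw [Finset.sum_range_succ, hζrec (K+1)]
      linarith
  -- conclusion
  have hCpos : 0 < ∑ t ∈ Finset.range (k+1), η t * (1 - η t) :=
    Finset.sum_pos (fun t _ => mul_pos (hη t).1 (by linarith [(hη t).2]))
      (Finset.nonempty_range_iff.mpr (Nat.succ_ne_zero k))
  have hζC : η (k+1) * ζ (k+1) = ∑ t ∈ Finset.range (k+1), η t * (1 - η t) := hζval (k+1)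
  have hZnn : 0 ≤ EX p (k+1) (fun σ => normSqW W ((momIter A W b w0 τ S η ζ (k+1) σ).1 - wstar)) :=
    EX_nonneg p hp _ _ (fun σ => hnsq _)
  have hSnn : 0 ≤ ∑ t ∈ Finset.range (k+1), η t * EX p t (fun σ => φ ((momIter A W b w0 τ S η ζ t σ).2)) :=
    Finset.sum_nonneg fun t _ => mul_nonneg (hη t).1.le
      (EX_nonneg p hp _ _ fun σ => hφnn _)
  have hmain' : (∑ t ∈ Finset.range (k+1), η t * (1 - η t))
      * EX p k (fun σ => φ ((momIter A W b w0 τ S η ζ k σ).2)) ≤ normSqW W (w0 - wstar) := by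
    have hm := main k
    rw [hζC] at hm
    linarith
  have h1 : (⨅ j, hEH.eigenvalues j) *
        (∑ σ : Fin k → Fin q, (∏ t, p (σ t)) *
          ((A *ᵥ (momIter A W b w0 τ S η ζ k σ).2 - b) ⬝ᵥ (A *ᵥ (momIter A W b w0 τ S η ζ k σ).2 - b)))
      ≤ EX p k (fun σ => φ ((momIter A W b w0 τ S η ζ k σ).2)) := by
    rw [EX, Finset.mul_sum]
    refine Finset.sum_le_sum fun σ _ => ?_
    have hq := inf_eig_quad hEH (A *ᵥ (momIter A W b w0 τ S η ζ k σ).2 - b)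
    have hpn : (0:ℝ) ≤ ∏ t, p (σ t) := Finset.prod_nonneg fun t _ => hp (σ t)
    simp only [hφdef]
    calc (⨅ j, hEH.eigenvalues j) * ((∏ t, p (σ t)) *
            ((A *ᵥ (momIter A W b w0 τ S η ζ k σ).2 - b) ⬝ᵥ (A *ᵥ (momIter A W b w0 τ S η ζ k σ).2 - b)))
        = (∏ t, p (σ t)) * ((⨅ j, hEH.eigenvalues j) *
            ((A *ᵥ (momIter A W b w0 τ S η ζ k σ).2 - b) ⬝ᵥ (A *ᵥ (momIter A W b w0 τ S η ζ k σ).2 - b))) := by ring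
      _ ≤ (∏ t, p (σ t)) * ((A *ᵥ (momIter A W b w0 τ S η ζ k σ).2 - b) ⬝ᵥ
            ((∑ i, p i • sketchH A W (S i)) *ᵥ (A *ᵥ (momIter A W b w0 τ S η ζ k σ).2 - b))) :=
          mul_le_mul_of_nonneg_left hq hpn
  rw [le_div_iff₀ hCpos]
  have h4 := mul_le_mul_of_nonneg_right h1 hCpos.le
  linarith
end

section
/- Let 0 < η < 1 be constant and set η_k ≡ η. Then the sequence ζ_k = k(1 − η) (with ζ_0 = 0) satisfies ζ_k = (1/η) Σ_{t=0}^{k−1} η(1 − η), the corresponding step size and momentum parameters are γ_k = η / ((k+1)(1−η) + 1) and β_k = 1 − (2−η) / ((k+1)(1−η) + 1), and under the assumptions and iterates of the momentum sketch-and-project convergence theorem (with a finite sketch distribution S_1,…,S_q, probabilities p_i, E[H_S] = Σ_i p_i H_{S_i}), for every k ≥ 1: λ_min(E[H_S]) · E[‖A w^k − b‖²] ≤ (1/k) · ‖w^0 − w*‖²_W / (η (1 − η)). -/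
open Matrix

/-! ### Auxiliary lemmas -/

lemma real_transpose_of_isHermitian {n : ℕ} {M : Matrix (Fin n) (Fin n) ℝ}
    (h : M.IsHermitian) : Mᵀ = M := by
  rw [← Matrix.conjTranspose_eq_transpose_of_trivial]; exact h

lemma dot_shift {n n' : ℕ} (P : Matrix (Fin n) (Fin n') ℝ) (r : Fin n' → ℝ) (v : Fin n → ℝ) :
    (P *ᵥ r) ⬝ᵥ v = r ⬝ᵥ (Pᵀ *ᵥ v) := by
  rw [dotProduct_comm, Matrix.dotProduct_mulVec, Matrix.mulVec_transpose, dotProduct_comm]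

lemma dot_symm {n : ℕ} (M : Matrix (Fin n) (Fin n) ℝ) (hM : Mᵀ = M) (u v : Fin n → ℝ) :
    u ⬝ᵥ (M *ᵥ v) = v ⬝ᵥ (M *ᵥ u) := by
  rw [← hM, ← dot_shift, dotProduct_comm, hM]

lemma sum_pi_succ {q k : ℕ} (G : (Fin (k+1) → Fin q) → ℝ) :
    ∑ σ : Fin (k+1) → Fin q, G σ = ∑ σ : Fin k → Fin q, ∑ i : Fin q, G (Fin.snoc σ i) := by
  rw [← Equiv.sum_comp (Fin.snocEquiv (fun _ => Fin q)) G, Fintype.sum_prod_type, Finset.sum_comm]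
  rfl

lemma prod_snoc {q n : ℕ} (p : Fin q → ℝ) (σ : Fin n → Fin q) (i : Fin q) :
    (∏ t : Fin (n+1), p ((Fin.snoc σ i : Fin (n+1) → Fin q) t)) = (∏ t, p (σ t)) * p i := by
  rw [Fin.prod_univ_castSucc]
  simp

lemma sum_weight_const {q : ℕ} (p : Fin q → ℝ) (hp1 : ∑ i, p i = 1) (c d : ℝ) :
    ∑ i : Fin q, c * p i * d = c * d := by
  rw [← Finset.sum_mul, ← Finset.mul_sum, hp1, mul_one]

lemma sketchH_transpose {m τ : ℕ} (A W : Matrix (Fin m) (Fin m) ℝ)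
    (hA : Aᵀ = A) (hW : Wᵀ = W) (S : Matrix (Fin m) (Fin τ) ℝ) :
    (sketchH A W S)ᵀ = sketchH A W S := by
  have hWi : (W⁻¹)ᵀ = W⁻¹ := by rw [Matrix.transpose_nonsing_inv, hW]
  have hM : (Sᵀ * A * W⁻¹ * A * S)ᵀ = Sᵀ * A * W⁻¹ * A * S := by
    simp [Matrix.transpose_mul, hA, hWi, Matrix.mul_assoc]
  simp [sketchH, Matrix.transpose_mul, Matrix.transpose_nonsing_inv, hM, hA, hW,
    Matrix.mul_assoc]

lemma sketchH_proj {m τ : ℕ} (A W : Matrix (Fin m) (Fin m) ℝ) (S : Matrix (Fin m) (Fin τ) ℝ)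
    (hS : IsUnit (Sᵀ * A * W⁻¹ * A * S)) :
    sketchH A W S * (A * W⁻¹ * A) * sketchH A W S = sketchH A W S := by
  have h1 : (Sᵀ * (A * (W⁻¹ * (A * S))))⁻¹ * (Sᵀ * (A * (W⁻¹ * (A * S)))) = 1 := by
    have h := Matrix.nonsing_inv_mul _ ((Matrix.isUnit_iff_isUnit_det _).mp hS)
    simpa only [Matrix.mul_assoc] using h
  have key : ∀ (X : Matrix (Fin τ) (Fin m) ℝ),
      (Sᵀ * (A * (W⁻¹ * (A * S))))⁻¹ * (Sᵀ * (A * (W⁻¹ * (A * (S * X))))) = X := by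
    intro X
    calc (Sᵀ * (A * (W⁻¹ * (A * S))))⁻¹ * (Sᵀ * (A * (W⁻¹ * (A * (S * X)))))
        = ((Sᵀ * (A * (W⁻¹ * (A * S))))⁻¹ * (Sᵀ * (A * (W⁻¹ * (A * S))))) * X := by
          simp only [Matrix.mul_assoc]
      _ = X := by rw [h1, Matrix.one_mul]
  unfold sketchH
  simp only [Matrix.mul_assoc]
  rw [key]

lemma sketchH_posSemidef {m τ : ℕ} (A W : Matrix (Fin m) (Fin m) ℝ)
    (hA : A.PosDef) (hW : W.PosDef) (S : Matrix (Fin m) (Fin τ) ℝ)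
    (hS : IsUnit (Sᵀ * A * W⁻¹ * A * S)) : (sketchH A W S).PosSemidef := by
  have hAt : Aᴴ = A := hA.1
  have hB : (A * W⁻¹ * A).PosSemidef := by
    have := (hW.inv.posSemidef).conjTranspose_mul_mul_same A
    rwa [hAt] at this
  have hM : (Sᵀ * A * W⁻¹ * A * S).PosSemidef := by
    have h := hB.conjTranspose_mul_mul_same S
    rwa [show Sᴴ * (A * W⁻¹ * A) * S = Sᵀ * A * W⁻¹ * A * S by
      simp only [Matrix.conjTranspose_eq_transpose_of_trivial, Matrix.mul_assoc]] at h
  have hMinv : ((Sᵀ * A * W⁻¹ * A * S)⁻¹).PosSemidef := by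
    have h2 := hM.conjTranspose_mul_mul_same (Sᵀ * A * W⁻¹ * A * S)⁻¹
    rwa [show ((Sᵀ * A * W⁻¹ * A * S)⁻¹)ᴴ * (Sᵀ * A * W⁻¹ * A * S) * (Sᵀ * A * W⁻¹ * A * S)⁻¹
        = (Sᵀ * A * W⁻¹ * A * S)⁻¹ by
      rw [Matrix.conjTranspose_nonsing_inv, hM.1,
        Matrix.nonsing_inv_mul _ ((Matrix.isUnit_iff_isUnit_det _).mp hS), one_mul]] at h2
  have h3 := hMinv.mul_mul_conjTranspose_same S
  rwa [show S * (Sᵀ * A * W⁻¹ * A * S)⁻¹ * Sᴴ = sketchH A W S by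
    rw [Matrix.conjTranspose_eq_transpose_of_trivial]; rfl] at h3

lemma sum_smul_mulVec {m q : ℕ} (p : Fin q → ℝ) (H : Fin q → Matrix (Fin m) (Fin m) ℝ)
    (v : Fin m → ℝ) :
    (∑ i, p i • H i) *ᵥ v = ∑ i, p i • (H i *ᵥ v) := by
  ext j
  simp only [Matrix.mulVec, dotProduct, Finset.sum_apply, Matrix.sum_apply,
    Matrix.smul_apply, smul_eq_mul, Pi.smul_apply, Finset.sum_mul]
  rw [Finset.sum_comm]
  refine Finset.sum_congr rfl fun i _ => ?_
  rw [Finset.mul_sum]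
  exact Finset.sum_congr rfl fun x _ => by ring

lemma dot_sum_smul {m q : ℕ} (p : Fin q → ℝ) (H : Fin q → Matrix (Fin m) (Fin m) ℝ)
    (v : Fin m → ℝ) :
    v ⬝ᵥ ((∑ i, p i • H i) *ᵥ v) = ∑ i, p i * (v ⬝ᵥ (H i *ᵥ v)) := by
  rw [sum_smul_mulVec]
  simp only [dotProduct, Finset.sum_apply, Pi.smul_apply, smul_eq_mul, Finset.mul_sum]
  rw [Finset.sum_comm]
  exact Finset.sum_congr rfl fun i _ => Finset.sum_congr rfl fun j _ => by ring

lemma inf_eig_le {n : ℕ} {M : Matrix (Fin n) (Fin n) ℝ} (hM : M.IsHermitian) (x : Fin n → ℝ) :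
    (⨅ j, hM.eigenvalues j) * (x ⬝ᵥ x) ≤ x ⬝ᵥ (M *ᵥ x) := by
  classical
  set U : Matrix (Fin n) (Fin n) ℝ := (hM.eigenvectorUnitary : Matrix (Fin n) (Fin n) ℝ) with hUdef
  have hUt : star U = Uᵀ := by
    rw [Matrix.star_eq_conjTranspose, Matrix.conjTranspose_eq_transpose_of_trivial]
  have hU1 : U * Uᵀ = 1 := by
    rw [← hUt]; exact (Matrix.mem_unitaryGroup_iff).mp hM.eigenvectorUnitary.2
  set y := Uᵀ *ᵥ x with hy
  have hyy : x ⬝ᵥ x = y ⬝ᵥ y := by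
    rw [hy, dot_shift, Matrix.transpose_transpose, Matrix.mulVec_mulVec, hU1,
      Matrix.one_mulVec, dotProduct_comm]
  have hMx : x ⬝ᵥ (M *ᵥ x) = ∑ j, hM.eigenvalues j * (y j * y j) := by
    conv_lhs => rw [hM.spectral_theorem, Unitary.conjStarAlgAut_apply, ← hUdef]
    rw [hUt, ← Matrix.mulVec_mulVec, ← Matrix.mulVec_mulVec, dotProduct_comm, dot_shift,
      dotProduct_comm, ← hy]
    simp [Matrix.mulVec_diagonal, dotProduct, mul_comm, mul_left_comm]
  have hxy : x ⬝ᵥ x = ∑ j, y j * y j := by rw [hyy]; rfl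
  rw [hMx, hxy, Finset.mul_sum]
  apply Finset.sum_le_sum
  intro j _
  have h1 : (⨅ j, hM.eigenvalues j) ≤ hM.eigenvalues j :=
    ciInf_le (Finite.bddBelow_range _) j
  exact mul_le_mul_of_nonneg_right h1 (mul_self_nonneg _)

/-- The core one-step inequality for a single sketch matrix. -/
lemma per_step {m : ℕ} (A W H : Matrix (Fin m) (Fin m) ℝ)
    (hAt : Aᵀ = A) (hWt : Wᵀ = W) (hWu : IsUnit W.det)
    (hHt : Hᵀ = H) (hHproj : H * (A * W⁻¹ * A) * H = H) (hHpsd : H.PosSemidef)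
    (b wstar : Fin m → ℝ) (hb : A *ᵥ wstar = b)
    (η ζt : ℝ) (hη0 : 0 < η) (hζt : 0 ≤ ζt)
    (z w w' : Fin m → ℝ) (hrel : z - w = ζt • (w - w')) :
    normSqW W (z - η • (W⁻¹ *ᵥ (A *ᵥ (H *ᵥ (A *ᵥ w - b)))) - wstar)
      ≤ normSqW W (z - wstar)
        + η * ζt * ((A *ᵥ w' - b) ⬝ᵥ (H *ᵥ (A *ᵥ w' - b)))
        - η * (ζt + 2 - η) * ((A *ᵥ w - b) ⬝ᵥ (H *ᵥ (A *ᵥ w - b))) := by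
  have hWiW : W⁻¹ * W = 1 := Matrix.nonsing_inv_mul _ hWu
  have hWWi : W * W⁻¹ = 1 := Matrix.mul_nonsing_inv _ hWu
  have hWit : (W⁻¹)ᵀ = W⁻¹ := by rw [Matrix.transpose_nonsing_inv, hWt]
  set r : Fin m → ℝ := A *ᵥ w - b with hr
  set r' : Fin m → ℝ := A *ᵥ w' - b with hr'
  set u : Fin m → ℝ := z - wstar with hu
  set g : Fin m → ℝ := W⁻¹ *ᵥ (A *ᵥ (H *ᵥ r)) with hg
  have hgm : g = (W⁻¹ * (A * H)) *ᵥ r := by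
    rw [hg, Matrix.mulVec_mulVec, Matrix.mulVec_mulVec, Matrix.mul_assoc]
  have hgWg : g ⬝ᵥ (W *ᵥ g) = r ⬝ᵥ (H *ᵥ r) := by
    rw [hgm, Matrix.mulVec_mulVec, dot_shift, Matrix.mulVec_mulVec]
    congr 1
    have h1 : (W⁻¹ * (A * H))ᵀ * (W * (W⁻¹ * (A * H))) = H * (A * (W⁻¹ * (A * H))) := by
      simp only [Matrix.transpose_mul, hAt, hWit, hHt, Matrix.mul_assoc]
      congr 2
      rw [← Matrix.mul_assoc, hWiW, Matrix.one_mul]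
    rw [h1]
    have h2 := hHproj
    simp only [Matrix.mul_assoc] at h2
    rw [h2]
  have hgWu : g ⬝ᵥ (W *ᵥ u) = r ⬝ᵥ (H *ᵥ (A *ᵥ u)) := by
    rw [hgm, dot_shift, Matrix.mulVec_mulVec]
    congr 1
    have h1 : (W⁻¹ * (A * H))ᵀ * W = H * A := by
      simp only [Matrix.transpose_mul, hAt, hWit, hHt, Matrix.mul_assoc]
      rw [hWiW]
      simp [Matrix.mul_assoc]
    rw [h1, ← Matrix.mulVec_mulVec]
  have hAu : A *ᵥ u = ζt • (r - r') + r := by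
    have h3 : u = (z - w) + (w - wstar) := by rw [hu]; abel
    rw [h3, Matrix.mulVec_add, hrel, Matrix.mulVec_smul, Matrix.mulVec_sub, Matrix.mulVec_sub, hb]
    rw [hr, hr']
    congr 1
    congr 1
    abel
  have hgWu2 : g ⬝ᵥ (W *ᵥ u) =
      ζt * (r ⬝ᵥ (H *ᵥ r)) - ζt * (r ⬝ᵥ (H *ᵥ r')) + r ⬝ᵥ (H *ᵥ r) := by
    rw [hgWu, hAu, Matrix.mulVec_add, Matrix.mulVec_smul, Matrix.mulVec_sub]
    simp [dotProduct_add, dotProduct_sub, dotProduct_smul, smul_eq_mul, mul_sub]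
  have hpsd : 0 ≤ (r - r') ⬝ᵥ (H *ᵥ (r - r')) := by
    have := hHpsd.dotProduct_mulVec_nonneg (r - r')
    simpa using this
  have hcc : r' ⬝ᵥ (H *ᵥ r) = r ⬝ᵥ (H *ᵥ r') := dot_symm H hHt r' r
  have hpsd2 : 2 * (r ⬝ᵥ (H *ᵥ r')) ≤ r ⬝ᵥ (H *ᵥ r) + r' ⬝ᵥ (H *ᵥ r') := by
    have hexp : (r - r') ⬝ᵥ (H *ᵥ (r - r'))
        = r ⬝ᵥ (H *ᵥ r) - r' ⬝ᵥ (H *ᵥ r) - (r ⬝ᵥ (H *ᵥ r') - r' ⬝ᵥ (H *ᵥ r')) := by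
      rw [Matrix.mulVec_sub]
      simp [sub_dotProduct, dotProduct_sub]
    rw [hexp, hcc] at hpsd
    linarith
  have hzsub : z - η • g - wstar = u - η • g := by rw [hu]; abel
  have hexp2 : normSqW W (u - η • g)
      = normSqW W u - 2 * η * (g ⬝ᵥ (W *ᵥ u)) + η ^ 2 * (g ⬝ᵥ (W *ᵥ g)) := by
    have hsy : u ⬝ᵥ (W *ᵥ g) = g ⬝ᵥ (W *ᵥ u) := dot_symm W hWt u g
    simp only [normSqW, Matrix.mulVec_sub, Matrix.mulVec_smul, dotProduct_sub, sub_dotProduct,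
      dotProduct_smul, smul_dotProduct, smul_eq_mul, hsy]
    ring
  rw [hzsub, hexp2, hgWg, hgWu2]
  have key : 0 ≤ η * ζt * ((r ⬝ᵥ (H *ᵥ r) + r' ⬝ᵥ (H *ᵥ r')) - 2 * (r ⬝ᵥ (H *ᵥ r'))) :=
    mul_nonneg (mul_nonneg hη0.le hζt) (by linarith)
  nlinarith [key]

/-- The one-step inequality averaged over the sketch distribution. -/
lemma step_pointwise {m q : ℕ} (A W : Matrix (Fin m) (Fin m) ℝ) (hA : A.PosDef) (hW : W.PosDef)
    (b wstar : Fin m → ℝ) (hb : A *ᵥ wstar = b)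
    (τ : Fin q → ℕ) (S : (i : Fin q) → Matrix (Fin m) (Fin (τ i)) ℝ)
    (hS : ∀ i, IsUnit ((S i)ᵀ * A * W⁻¹ * A * S i))
    (p : Fin q → ℝ) (hp : ∀ i, 0 ≤ p i) (hp1 : ∑ i, p i = 1)
    (η ζt : ℝ) (hη0 : 0 < η) (hζt : 0 ≤ ζt)
    (z w w' : Fin m → ℝ) (hrel : z - w = ζt • (w - w')) :
    ∑ i, p i * normSqW W (z - η • sketchGrad A W (S i) b w - wstar)
      ≤ normSqW W (z - wstar)
        + η * ζt * ((A *ᵥ w' - b) ⬝ᵥ ((∑ i, p i • sketchH A W (S i)) *ᵥ (A *ᵥ w' - b)))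
        - η * (ζt + 2 - η) * ((A *ᵥ w - b) ⬝ᵥ ((∑ i, p i • sketchH A W (S i)) *ᵥ (A *ᵥ w - b))) := by
  have hAt : Aᵀ = A := real_transpose_of_isHermitian hA.1
  have hWt : Wᵀ = W := real_transpose_of_isHermitian hW.1
  have hWu : IsUnit W.det := isUnit_iff_ne_zero.mpr hW.det_pos.ne'
  have per : ∀ i, normSqW W (z - η • sketchGrad A W (S i) b w - wstar)
      ≤ normSqW W (z - wstar)
        + η * ζt * ((A *ᵥ w' - b) ⬝ᵥ (sketchH A W (S i) *ᵥ (A *ᵥ w' - b)))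
        - η * (ζt + 2 - η) * ((A *ᵥ w - b) ⬝ᵥ (sketchH A W (S i) *ᵥ (A *ᵥ w - b))) := fun i =>
    per_step A W (sketchH A W (S i)) hAt hWt hWu
      (sketchH_transpose A W hAt hWt (S i)) (sketchH_proj A W (S i) (hS i))
      (sketchH_posSemidef A W hA hW (S i) (hS i)) b wstar hb η ζt hη0 hζt z w w' hrel
  calc ∑ i, p i * normSqW W (z - η • sketchGrad A W (S i) b w - wstar)
      ≤ ∑ i, p i * (normSqW W (z - wstar)
          + η * ζt * ((A *ᵥ w' - b) ⬝ᵥ (sketchH A W (S i) *ᵥ (A *ᵥ w' - b)))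
          - η * (ζt + 2 - η) * ((A *ᵥ w - b) ⬝ᵥ (sketchH A W (S i) *ᵥ (A *ᵥ w - b)))) :=
        Finset.sum_le_sum fun i _ => mul_le_mul_of_nonneg_left (per i) (hp i)
    _ = normSqW W (z - wstar)
        + η * ζt * ((A *ᵥ w' - b) ⬝ᵥ ((∑ i, p i • sketchH A W (S i)) *ᵥ (A *ᵥ w' - b)))
        - η * (ζt + 2 - η) * ((A *ᵥ w - b) ⬝ᵥ ((∑ i, p i • sketchH A W (S i)) *ᵥ (A *ᵥ w - b))) := by
        simp only [mul_add, mul_sub, Finset.sum_add_distrib, Finset.sum_sub_distrib]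
        congr 1
        · congr 1
          · rw [← Finset.sum_mul, hp1, one_mul]
          · rw [dot_sum_smul, Finset.mul_sum]
            exact Finset.sum_congr rfl fun i _ => by ring
        · rw [dot_sum_smul, Finset.mul_sum]
          exact Finset.sum_congr rfl fun i _ => by ring

lemma momIter_snoc_fst {m q : ℕ} (A W : Matrix (Fin m) (Fin m) ℝ) (b w0 : Fin m → ℝ)
    (τ : Fin q → ℕ) (S : (i : Fin q) → Matrix (Fin m) (Fin (τ i)) ℝ)
    (ηf ζ : ℕ → ℝ) (n : ℕ) (σ : Fin n → Fin q) (i : Fin q) :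
    (momIter A W b w0 τ S ηf ζ (n+1) (Fin.snoc σ i)).1
      = (momIter A W b w0 τ S ηf ζ n σ).1
        - ηf n • sketchGrad A W (S i) b (momIter A W b w0 τ S ηf ζ n σ).2 := by
  have h1 : (fun j : Fin n => (Fin.snoc σ i : Fin (n+1) → Fin q) j.castSucc) = σ := by
    funext j; simp
  have h2 : (Fin.snoc σ i : Fin (n+1) → Fin q) (Fin.last n) = i := by simp
  have h3 := congrArg (fun j : Fin q =>
    ηf n • sketchGrad A W (S j) b (momIter A W b w0 τ S ηf ζ n σ).2) h2
  simp [momIter, h1, h3]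

lemma momIter_rel {m q : ℕ} (A W : Matrix (Fin m) (Fin m) ℝ) (b w0 : Fin m → ℝ)
    (τ : Fin q → ℕ) (S : (i : Fin q) → Matrix (Fin m) (Fin (τ i)) ℝ)
    (ηf ζ : ℕ → ℝ) (n : ℕ) (hc : ζ (n+1) + 1 ≠ 0) (σ : Fin (n+1) → Fin q) :
    (momIter A W b w0 τ S ηf ζ (n+1) σ).1 - (momIter A W b w0 τ S ηf ζ (n+1) σ).2
      = ζ (n+1) • ((momIter A W b w0 τ S ηf ζ (n+1) σ).2
          - (momIter A W b w0 τ S ηf ζ n (fun j => σ j.castSucc)).2) := by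
  set zw := momIter A W b w0 τ S ηf ζ n (fun j => σ j.castSucc) with hzw
  set z' := zw.1 - ηf n • sketchGrad A W (S (σ (Fin.last n))) b zw.2 with hz'
  have h2 : momIter A W b w0 τ S ηf ζ (n+1) σ
      = (z', (1 - 1 / (ζ (n+1) + 1)) • zw.2 + (1 / (ζ (n+1) + 1)) • z') := by
    simp [momIter, hzw, hz']
  rw [h2]
  funext j
  simp only [Pi.sub_apply, Pi.add_apply, Pi.smul_apply, smul_eq_mul]
  field_simp
  ring

/-- **Constant-`η` momentum (Corollary 1):** for constant `η_k ≡ η ∈ (0,1)` the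
schedule `ζ_k = k(1−η)` satisfies `ζ_k = (1/η) Σ_{t<k} η(1−η)`, the induced step
size and momentum parameters are `γ_k = η/((k+1)(1−η)+1)` and
`β_k = 1 − (2−η)/((k+1)(1−η)+1)`, and the momentum iterates satisfy, for `k ≥ 1`,
`λ_min(E[H_S]) E[‖A w^k − b‖²] ≤ (1/k) ‖w⁰ − w*‖²_W / (η(1−η))`.
(The hypothesis `hEH` records the — always valid — fact that `E[H_S]` is symmetric.) -/
theorem momentum_constant_eta_convergence {m q : ℕ}
    (A W : Matrix (Fin m) (Fin m) ℝ) (hA : A.PosDef) (hW : W.PosDef)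
    (b wstar : Fin m → ℝ) (hwstar : wstar = A⁻¹ *ᵥ b)
    (τ : Fin q → ℕ) (S : (i : Fin q) → Matrix (Fin m) (Fin (τ i)) ℝ)
    (hS : ∀ i, IsUnit ((S i)ᵀ * A * W⁻¹ * A * S i))
    (p : Fin q → ℝ) (hp : ∀ i, 0 ≤ p i) (hp1 : ∑ i, p i = 1)
    (η : ℝ) (hη0 : 0 < η) (hη1 : η < 1)
    (ζ : ℕ → ℝ) (hζ : ∀ k, ζ k = (k : ℝ) * (1 - η))
    (hEH : (∑ i, p i • sketchH A W (S i)).IsHermitian)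
    (w0 : Fin m → ℝ) :
    (∀ k, ζ k = η⁻¹ * ∑ t ∈ Finset.range k, η * (1 - η)) ∧
    (∀ k : ℕ, η / (ζ (k + 1) + 1) = η / (((k : ℝ) + 1) * (1 - η) + 1)) ∧
    (∀ k : ℕ, ζ k / (ζ (k + 1) + 1)
      = 1 - (2 - η) / (((k : ℝ) + 1) * (1 - η) + 1)) ∧
    ∀ k : ℕ, 1 ≤ k →
      (⨅ j, hEH.eigenvalues j) *
          (∑ σ : Fin k → Fin q, (∏ t, p (σ t)) *
            ((A *ᵥ (momIter A W b w0 τ S (fun _ => η) ζ k σ).2 - b) ⬝ᵥ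
              (A *ᵥ (momIter A W b w0 τ S (fun _ => η) ζ k σ).2 - b)))
        ≤ (1 / (k : ℝ)) * (normSqW W (w0 - wstar) / (η * (1 - η))) := by
  have h1mη : 0 < 1 - η := by linarith
  have hζnn : ∀ k, 0 ≤ ζ k := fun k => by
    rw [hζ]; exact mul_nonneg (Nat.cast_nonneg k) h1mη.le
  have hAu : IsUnit A.det := isUnit_iff_ne_zero.mpr hA.det_pos.ne'
  have hb : A *ᵥ wstar = b := by
    rw [hwstar, Matrix.mulVec_mulVec, Matrix.mul_nonsing_inv _ hAu, Matrix.one_mulVec]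
  refine ⟨?_, ?_, ?_, ?_⟩
  · intro k
    rw [hζ, Finset.sum_const, Finset.card_range, nsmul_eq_mul]
    field_simp
  · intro k
    rw [hζ]
    push_cast
    ring_nf
  · intro k
    have hk0 : (0:ℝ) ≤ (k:ℝ) := Nat.cast_nonneg k
    have hd : ((k:ℝ)+1)*(1-η)+1 ≠ 0 := by nlinarith
    rw [hζ, hζ]
    push_cast
    field_simp
    ring
  · intro k hk
    classical
    set Ebar := ∑ i, p i • sketchH A W (S i) with hEbar
    set Z : ℕ → ℝ := fun n => ∑ σ : Fin n → Fin q, (∏ t, p (σ t)) *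
        normSqW W ((momIter A W b w0 τ S (fun _ => η) ζ n σ).1 - wstar) with hZ
    set R : ℕ → ℝ := fun n => ∑ σ : Fin n → Fin q, (∏ t, p (σ t)) *
        ((A *ᵥ (momIter A W b w0 τ S (fun _ => η) ζ n σ).2 - b) ⬝ᵥ
          (Ebar *ᵥ (A *ᵥ (momIter A W b w0 τ S (fun _ => η) ζ n σ).2 - b))) with hR
    have hprod : ∀ {n : ℕ} (σ : Fin n → Fin q), 0 ≤ ∏ t, p (σ t) :=
      fun σ => Finset.prod_nonneg fun t _ => hp _
    have hnormnn : ∀ v, 0 ≤ normSqW W v := fun v => by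
      simpa [normSqW] using hW.posSemidef.dotProduct_mulVec_nonneg v
    have hdotEnn : ∀ v : Fin m → ℝ, 0 ≤ v ⬝ᵥ (Ebar *ᵥ v) := fun v => by
      rw [hEbar, dot_sum_smul]
      exact Finset.sum_nonneg fun i _ => mul_nonneg (hp i)
        (by simpa using (sketchH_posSemidef A W hA hW (S i) (hS i)).dotProduct_mulVec_nonneg v)
    have hZnn : ∀ n, 0 ≤ Z n := fun n =>
      Finset.sum_nonneg fun σ _ => mul_nonneg (hprod σ) (hnormnn _)
    have hRnn : ∀ n, 0 ≤ R n := fun n =>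
      Finset.sum_nonneg fun σ _ => mul_nonneg (hprod σ) (hdotEnn _)
    have hZ0 : Z 0 = normSqW W (w0 - wstar) := by
      simp only [hZ]
      rw [Fintype.sum_unique]
      simp [momIter]
    have hζ0 : ζ 0 = 0 := by rw [hζ]; simp
    -- the key one-step estimate
    have key : ∀ (n : ℕ) (w' : (Fin n → Fin q) → (Fin m → ℝ)),
        (∀ σ : Fin n → Fin q,
          (momIter A W b w0 τ S (fun _ => η) ζ n σ).1 - (momIter A W b w0 τ S (fun _ => η) ζ n σ).2
            = ζ n • ((momIter A W b w0 τ S (fun _ => η) ζ n σ).2 - w' σ)) →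
        Z (n+1) + η * (ζ (n+1) + 1) * R n
          ≤ Z n + η * ζ n * (∑ σ : Fin n → Fin q, (∏ t, p (σ t)) *
              ((A *ᵥ w' σ - b) ⬝ᵥ (Ebar *ᵥ (A *ᵥ w' σ - b)))) := by
      intro n w' hrel
      have hcoef : ζ n + 2 - η = ζ (n+1) + 1 := by rw [hζ, hζ]; push_cast; ring
      have hZsucc : Z (n+1) = ∑ σ : Fin n → Fin q, (∏ t, p (σ t)) *
          (∑ i, p i * normSqW W ((momIter A W b w0 τ S (fun _ => η) ζ n σ).1
            - η • sketchGrad A W (S i) b (momIter A W b w0 τ S (fun _ => η) ζ n σ).2 - wstar)) := by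
        simp only [hZ]
        rw [sum_pi_succ]
        refine Finset.sum_congr rfl fun σ _ => ?_
        rw [Finset.mul_sum]
        refine Finset.sum_congr rfl fun i _ => ?_
        rw [momIter_snoc_fst]
        simp only [Fin.prod_univ_castSucc, Fin.snoc_castSucc, Fin.snoc_last]
        ring
      have hle : Z (n+1) ≤ Z n
          + η * ζ n * (∑ σ : Fin n → Fin q, (∏ t, p (σ t)) *
              ((A *ᵥ w' σ - b) ⬝ᵥ (Ebar *ᵥ (A *ᵥ w' σ - b))))
          - η * (ζ n + 2 - η) * R n := by
        rw [hZsucc]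
        simp only [hZ, hR]
        have hterm : ∀ σ : Fin n → Fin q, (∏ t, p (σ t)) *
            (∑ i, p i * normSqW W ((momIter A W b w0 τ S (fun _ => η) ζ n σ).1
              - η • sketchGrad A W (S i) b (momIter A W b w0 τ S (fun _ => η) ζ n σ).2 - wstar))
            ≤ (∏ t, p (σ t)) *
              (normSqW W ((momIter A W b w0 τ S (fun _ => η) ζ n σ).1 - wstar)
                + η * ζ n * ((A *ᵥ w' σ - b) ⬝ᵥ (Ebar *ᵥ (A *ᵥ w' σ - b)))
                - η * (ζ n + 2 - η) *
                  ((A *ᵥ (momIter A W b w0 τ S (fun _ => η) ζ n σ).2 - b) ⬝ᵥ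
                    (Ebar *ᵥ (A *ᵥ (momIter A W b w0 τ S (fun _ => η) ζ n σ).2 - b)))) := by
          intro σ
          refine mul_le_mul_of_nonneg_left ?_ (hprod σ)
          rw [hEbar]
          exact step_pointwise A W hA hW b wstar hb τ S hS p hp hp1 η (ζ n) hη0 (hζnn n)
            _ _ _ (hrel σ)
        refine le_trans (Finset.sum_le_sum fun σ _ => hterm σ) (le_of_eq ?_)
        simp only [mul_add, mul_sub, Finset.sum_add_distrib, Finset.sum_sub_distrib,
          Finset.mul_sum]
        congr 1
        · congr 1
          exact Finset.sum_congr rfl fun σ _ => by ring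
        · exact Finset.sum_congr rfl fun σ _ => by ring
      rw [hcoef] at hle
      linarith
    -- the telescoped estimate
    have main : ∀ n : ℕ, Z (n+1) + η * (ζ (n+1) + 1) * R n ≤ normSqW W (w0 - wstar) := by
      intro n
      induction n with
      | zero =>
          have h := key 0 (fun _ => w0) (fun σ => by simp [momIter, hζ0])
          rw [hζ0, hZ0] at h
          simpa using h
      | succ n ih =>
          have hc : ζ (n+1) + 1 ≠ 0 := by
            have := hζnn (n+1); linarith
          have h := key (n+1)
            (fun σ => (momIter A W b w0 τ S (fun _ => η) ζ n (fun j => σ j.castSucc)).2)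
            (fun σ => momIter_rel A W b w0 τ S (fun _ => η) ζ n hc σ)
          have hprev : (∑ σ : Fin (n+1) → Fin q, (∏ t, p (σ t)) *
              ((A *ᵥ (momIter A W b w0 τ S (fun _ => η) ζ n (fun j => σ j.castSucc)).2 - b) ⬝ᵥ
                (Ebar *ᵥ (A *ᵥ (momIter A W b w0 τ S (fun _ => η) ζ n
                  (fun j => σ j.castSucc)).2 - b)))) = R n := by
            simp only [hR]
            rw [sum_pi_succ]
            refine Finset.sum_congr rfl fun σ _ => ?_
            simp only [Fin.prod_univ_castSucc, Fin.snoc_castSucc, Fin.snoc_last]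
            exact sum_weight_const p hp1 _ _
          rw [hprev] at h
          have hmono : η * ζ (n+1) * R n ≤ η * (ζ (n+1) + 1) * R n - η * R n := by
            nlinarith [hRnn n, hη0]
          have hRn1 := hRnn (n+1)
          have hηRn := mul_nonneg hη0.le (hRnn n)
          linarith
    -- conclude
    have hfin := main k
    have hZk1 := hZnn (k+1)
    have hRk : η * (ζ (k+1) + 1) * R k ≤ normSqW W (w0 - wstar) := by linarith
    -- lower bound by the smallest eigenvalue
    have hlow : (⨅ j, hEH.eigenvalues j) *
        (∑ σ : Fin k → Fin q, (∏ t, p (σ t)) *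
          ((A *ᵥ (momIter A W b w0 τ S (fun _ => η) ζ k σ).2 - b) ⬝ᵥ
            (A *ᵥ (momIter A W b w0 τ S (fun _ => η) ζ k σ).2 - b))) ≤ R k := by
      simp only [hR]
      rw [Finset.mul_sum]
      refine Finset.sum_le_sum fun σ _ => ?_
      set v := A *ᵥ (momIter A W b w0 τ S (fun _ => η) ζ k σ).2 - b with hv
      have h2 := inf_eig_le hEH v
      calc (⨅ j, hEH.eigenvalues j) * ((∏ t, p (σ t)) * (v ⬝ᵥ v))
          = (∏ t, p (σ t)) * ((⨅ j, hEH.eigenvalues j) * (v ⬝ᵥ v)) := by ring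
        _ ≤ (∏ t, p (σ t)) * (v ⬝ᵥ (Ebar *ᵥ v)) := by
            exact mul_le_mul_of_nonneg_left h2 (hprod σ)
    -- numeric chain
    have hk1 : (1:ℝ) ≤ (k:ℝ) := by exact_mod_cast hk
    have hkpos : (0:ℝ) < (k:ℝ) := by linarith
    have hden : 0 < η * ((k:ℝ) * (1 - η)) := by positivity
    have hcmp : η * ((k:ℝ) * (1 - η)) * R k ≤ normSqW W (w0 - wstar) := by
      have hle2 : η * ((k:ℝ) * (1 - η)) ≤ η * (ζ (k+1) + 1) := by
        rw [hζ]
        push_cast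
        nlinarith [hη0.le, h1mη.le]
      nlinarith [hRnn k, hRk, hle2]
    have hgoal : R k ≤ (1 / (k:ℝ)) * (normSqW W (w0 - wstar) / (η * (1 - η))) := by
      rw [div_mul_eq_mul_div, one_mul, div_div,
        le_div_iff₀ (by positivity : (0:ℝ) < η * (1 - η) * (k:ℝ))]
      calc R k * (η * (1 - η) * (k:ℝ)) = η * ((k:ℝ) * (1 - η)) * R k := by ring
        _ ≤ normSqW W (w0 - wstar) := hcmp
    exact le_trans hlow hgoal
end
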